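/- arXiv:2510.14910 — 2 statements merged into one kernel-verified Lean document; each statement's English description precedes it below -/
import Mathlib

section
/- Fix ρ > 0 and define R, Z : ℝ² → ℝ by R(x,z) = ρ·x(1+z²)/(1+x²z²) and Z(x,z) = ρ·z(1−x²)/(1+x²z²). Then at every point (x,z) (with 1 + x²z² ≠ 0, which always holds): (i) (∂ₓR)² + (∂ₓZ)² = ρ²(1+z²)²/(1+x²z²)²; (ii) (∂_zR)² + (∂_zZ)² = ρ²(1−x²)²/(1+x²z²)²; (iii) ∂ₓR·∂_zR + ∂ₓZ·∂_zZ = 0. -/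
/-! With `w = x z` the Jacobian columns are `∂ₓ(R, Z) = ρ (1 + z²) (1 − w², −2w) / (1 + w²)²` and
`∂_z(R, Z) = ρ (1 − x²) (2w, 1 − w²) / (1 + w²)²`. The vectors `(1 − w², −2w)` and `(2w, 1 − w²)`
are orthogonal and both have length `1 + w²`, which gives all three identities. -/

section MoebiusCoordinates

variable (ρ x z : ℝ)

theorem hasDerivAt_moebiusR_left :
    HasDerivAt (fun t => ρ * t * (1 + z ^ 2) / (1 + t ^ 2 * z ^ 2))
      (ρ * (1 + z ^ 2) * (1 - (x * z) ^ 2) / (1 + (x * z) ^ 2) ^ 2) x := by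
  have hD : 1 + x ^ 2 * z ^ 2 ≠ 0 := by positivity
  refine (((hasDerivAt_id x).const_mul ρ).mul_const (1 + z ^ 2)).div
    (((hasDerivAt_pow 2 x).mul_const (z ^ 2)).const_add 1) hD |>.congr_deriv ?_
  simp only [id, Nat.cast_ofNat, Nat.add_one_sub_one, pow_one]
  field_simp
  ring

theorem hasDerivAt_moebiusR_right :
    HasDerivAt (fun t => ρ * x * (1 + t ^ 2) / (1 + x ^ 2 * t ^ 2))
      (ρ * (1 - x ^ 2) * (2 * (x * z)) / (1 + (x * z) ^ 2) ^ 2) z := by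
  have hD : 1 + x ^ 2 * z ^ 2 ≠ 0 := by positivity
  refine (((hasDerivAt_pow 2 z).const_add 1).const_mul (ρ * x)).div
    (((hasDerivAt_pow 2 z).const_mul (x ^ 2)).const_add 1) hD |>.congr_deriv ?_
  simp only [Nat.cast_ofNat, Nat.add_one_sub_one, pow_one]
  field_simp
  ring

theorem hasDerivAt_moebiusZ_left :
    HasDerivAt (fun t => ρ * z * (1 - t ^ 2) / (1 + t ^ 2 * z ^ 2))
      (ρ * (1 + z ^ 2) * (-(2 * (x * z))) / (1 + (x * z) ^ 2) ^ 2) x := by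
  have hD : 1 + x ^ 2 * z ^ 2 ≠ 0 := by positivity
  refine (((hasDerivAt_pow 2 x).const_sub 1).const_mul (ρ * z)).div
    (((hasDerivAt_pow 2 x).mul_const (z ^ 2)).const_add 1) hD |>.congr_deriv ?_
  simp only [Nat.cast_ofNat, Nat.add_one_sub_one, pow_one]
  field_simp
  ring

theorem hasDerivAt_moebiusZ_right :
    HasDerivAt (fun t => ρ * t * (1 - x ^ 2) / (1 + x ^ 2 * t ^ 2))
      (ρ * (1 - x ^ 2) * (1 - (x * z) ^ 2) / (1 + (x * z) ^ 2) ^ 2) z := by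
  have hD : 1 + x ^ 2 * z ^ 2 ≠ 0 := by positivity
  refine (((hasDerivAt_id z).const_mul ρ).mul_const (1 - x ^ 2)).div
    (((hasDerivAt_pow 2 z).const_mul (x ^ 2)).const_add 1) hD |>.congr_deriv ?_
  simp only [id, Nat.cast_ofNat, Nat.add_one_sub_one, pow_one]
  field_simp
  ring

end MoebiusCoordinates

theorem stmt_10_general (ρ : ℝ) (R Z : ℝ → ℝ → ℝ)
    (hR : ∀ x z, R x z = ρ * x * (1 + z ^ 2) / (1 + x ^ 2 * z ^ 2))
    (hZ : ∀ x z, Z x z = ρ * z * (1 - x ^ 2) / (1 + x ^ 2 * z ^ 2)) (x z : ℝ) :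
    ((deriv (fun t => R t z) x) ^ 2 + (deriv (fun t => Z t z) x) ^ 2
        = ρ ^ 2 * (1 + z ^ 2) ^ 2 / (1 + x ^ 2 * z ^ 2) ^ 2) ∧
    ((deriv (fun t => R x t) z) ^ 2 + (deriv (fun t => Z x t) z) ^ 2
        = ρ ^ 2 * (1 - x ^ 2) ^ 2 / (1 + x ^ 2 * z ^ 2) ^ 2) ∧
    (deriv (fun t => R t z) x * deriv (fun t => R x t) z
        + deriv (fun t => Z t z) x * deriv (fun t => Z x t) z = 0) := by
  have hRx := (hasDerivAt_moebiusR_left ρ x z).deriv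
  have hRz := (hasDerivAt_moebiusR_right ρ x z).deriv
  have hZx := (hasDerivAt_moebiusZ_left ρ x z).deriv
  have hZz := (hasDerivAt_moebiusZ_right ρ x z).deriv
  simp only [hR, hZ, hRx, hRz, hZx, hZz]
  have hD : 1 + (x * z) ^ 2 ≠ 0 := by positivity
  refine ⟨?_, ?_, ?_⟩ <;> field_simp <;> ring

/-- The Moebius-type tube coordinates on the ball: with
R(x,z) = ρ·x(1+z²)/(1+x²z²) and Z(x,z) = ρ·z(1−x²)/(1+x²z²), the pullback of the flat
metric dR² + dZ² is (ρ²/(1+x²z²)²)((1+z²)²dx² + (1−x²)²dz²): the coordinate vector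
fields are orthogonal with explicit conformal factors. -/
theorem stmt_10 (ρ : ℝ) (hρ : 0 < ρ) (R Z : ℝ → ℝ → ℝ)
    (hR : ∀ x z, R x z = ρ * x * (1 + z ^ 2) / (1 + x ^ 2 * z ^ 2))
    (hZ : ∀ x z, Z x z = ρ * z * (1 - x ^ 2) / (1 + x ^ 2 * z ^ 2)) (x z : ℝ) :
    ((deriv (fun t => R t z) x) ^ 2 + (deriv (fun t => Z t z) x) ^ 2
        = ρ ^ 2 * (1 + z ^ 2) ^ 2 / (1 + x ^ 2 * z ^ 2) ^ 2) ∧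
    ((deriv (fun t => R x t) z) ^ 2 + (deriv (fun t => Z x t) z) ^ 2
        = ρ ^ 2 * (1 - x ^ 2) ^ 2 / (1 + x ^ 2 * z ^ 2) ^ 2) ∧
    (deriv (fun t => R t z) x * deriv (fun t => R x t) z
        + deriv (fun t => Z t z) x * deriv (fun t => Z x t) z = 0) :=
  stmt_10_general ρ R Z hR hZ x z
end

section
/- Let n ≥ 1, L > 0. Let γ₀ : [0,L] → ℝⁿ and w : [0,L] → ℝⁿ be C¹ with w(0) = 0 and w(L) = 0, and let X : ℝⁿ → ℝⁿ be C¹ with ‖X(p)‖ ≤ 1 and ‖DX(p)‖ ≤ 1 (operator norm) for all p. Then |∫₀^L X(γ₀(t)+w(t))·(γ₀'(t)+w'(t)) dt − ∫₀^L X(γ₀(t))·γ₀'(t) dt| ≤ (sup_{t∈[0,L]} ‖w(t)‖) · (∫₀^L ‖γ₀'(t)+w'(t)‖ dt + ∫₀^L ‖γ₀'(t)‖ dt). -/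
/-!
Split the difference of the two actions as
`∫ ⟪X(γ₀ + w) - X(γ₀), γ₀' + w'⟫ + ∫ ⟪X(γ₀), w'⟫`. Integrating the second term by parts, the
boundary terms vanish because `w(0) = w(L) = 0`, and it becomes `-∫ ⟪DX(γ₀) γ₀', w⟫`. Since
`‖DX‖ ≤ 1`, the field `X` is `1`-Lipschitz, so the two integrands are bounded by `‖w‖ ‖γ₀' + w'‖`
and `‖w‖ ‖γ₀'‖` respectively.
-/

open scoped RealInnerProductSpace

section

open intervalIntegral

variable {E : Type*} [NormedAddCommGroup E] [InnerProductSpace ℝ E]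
  {X : E → E} {γ w : ℝ → E} {a b C M : ℝ}

theorem integral_inner_comp_deriv_eq_neg_of_eq_zero (hX : ContDiff ℝ 1 X)
    (hγ : ContDiff ℝ 1 γ) (hw : ContDiff ℝ 1 w) (ha : w a = 0) (hb : w b = 0) :
    ∫ t in a..b, ⟪X (γ t), deriv w t⟫ = -∫ t in a..b, ⟪fderiv ℝ X (γ t) (deriv γ t), w t⟫ := by
  have hderiv : ∀ t, HasDerivAt (fun s ↦ ⟪X (γ s), w s⟫)
      (⟪X (γ t), deriv w t⟫ + ⟪fderiv ℝ X (γ t) (deriv γ t), w t⟫) t := fun t ↦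
    ((hX.differentiable one_ne_zero _).hasFDerivAt.comp_hasDerivAt t
      (hγ.differentiable one_ne_zero t).hasDerivAt).inner ℝ
      (hw.differentiable one_ne_zero t).hasDerivAt
  have h₁ : Continuous fun t ↦ ⟪X (γ t), deriv w t⟫ := by fun_prop
  have h₂ : Continuous fun t ↦ ⟪fderiv ℝ X (γ t) (deriv γ t), w t⟫ := by fun_prop
  have hftc := integral_eq_sub_of_hasDerivAt (fun t _ ↦ hderiv t)
    ((h₁.add h₂).intervalIntegrable a b)
  rw [integral_add (h₁.intervalIntegrable a b) (h₂.intervalIntegrable a b),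
    ha, hb, inner_zero_right, inner_zero_right, sub_zero] at hftc
  exact eq_neg_of_add_eq_zero_left hftc

theorem integral_inner_add_sub_integral_inner_eq (hX : ContDiff ℝ 1 X)
    (hγ : ContDiff ℝ 1 γ) (hw : ContDiff ℝ 1 w) (ha : w a = 0) (hb : w b = 0) :
    (∫ t in a..b, ⟪X (γ t + w t), deriv γ t + deriv w t⟫) - ∫ t in a..b, ⟪X (γ t), deriv γ t⟫
      = ∫ t in a..b, (⟪X (γ t + w t) - X (γ t), deriv γ t + deriv w t⟫
          - ⟪fderiv ℝ X (γ t) (deriv γ t), w t⟫) :=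
  calc _ = ∫ t in a..b, (⟪X (γ t + w t), deriv γ t + deriv w t⟫ - ⟪X (γ t), deriv γ t⟫) :=
        (integral_sub (Continuous.intervalIntegrable (by fun_prop) _ _)
          (Continuous.intervalIntegrable (by fun_prop) _ _)).symm
    _ = ∫ t in a..b, (⟪X (γ t + w t) - X (γ t), deriv γ t + deriv w t⟫
          + ⟪X (γ t), deriv w t⟫) := integral_congr fun t _ ↦ by
        simp only [inner_sub_left, inner_add_right]
        ring
    _ = _ := by
        rw [integral_add (Continuous.intervalIntegrable (by fun_prop) _ _)
          (Continuous.intervalIntegrable (by fun_prop) _ _),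
          integral_inner_comp_deriv_eq_neg_of_eq_zero hX hγ hw ha hb, ← sub_eq_add_neg,
          integral_sub (Continuous.intervalIntegrable (by fun_prop) _ _)
          (Continuous.intervalIntegrable (by fun_prop) _ _)]

theorem abs_inner_sub_sub_inner_fderiv_le (hX : Differentiable ℝ X)
    (hDX : ∀ p, ‖fderiv ℝ X p‖ ≤ C) (p v u u' : E) :
    |⟪X (p + v) - X p, u⟫ - ⟪fderiv ℝ X p u', v⟫| ≤ C * ‖v‖ * (‖u‖ + ‖u'‖) := by
  have hC : 0 ≤ C := (norm_nonneg _).trans (hDX p)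
  have hlip : ‖X (p + v) - X p‖ ≤ C * ‖v‖ := by
    simpa using convex_univ.norm_image_sub_le_of_norm_fderiv_le (fun x _ ↦ hX x)
      (fun x _ ↦ hDX x) (Set.mem_univ p) (Set.mem_univ (p + v))
  have hD : ‖fderiv ℝ X p u'‖ ≤ C * ‖u'‖ := (fderiv ℝ X p).le_of_opNorm_le (hDX p) u'
  calc |⟪X (p + v) - X p, u⟫ - ⟪fderiv ℝ X p u', v⟫|
      ≤ |⟪X (p + v) - X p, u⟫| + |⟪fderiv ℝ X p u', v⟫| := abs_sub _ _
    _ ≤ ‖X (p + v) - X p‖ * ‖u‖ + ‖fderiv ℝ X p u'‖ * ‖v‖ :=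
      add_le_add (abs_real_inner_le_norm _ _) (abs_real_inner_le_norm _ _)
    _ ≤ C * ‖v‖ * ‖u‖ + C * ‖u'‖ * ‖v‖ := by gcongr
    _ = C * ‖v‖ * (‖u‖ + ‖u'‖) := by ring

theorem abs_integral_inner_add_sub_integral_inner_le (hab : a ≤ b) (hX : ContDiff ℝ 1 X)
    (hDX : ∀ p, ‖fderiv ℝ X p‖ ≤ C) (hγ : ContDiff ℝ 1 γ) (hw : ContDiff ℝ 1 w)
    (ha : w a = 0) (hb : w b = 0) (hM : ∀ t ∈ Set.Icc a b, ‖w t‖ ≤ M) :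
    |(∫ t in a..b, ⟪X (γ t + w t), deriv γ t + deriv w t⟫) - ∫ t in a..b, ⟪X (γ t), deriv γ t⟫|
      ≤ C * M * ((∫ t in a..b, ‖deriv γ t + deriv w t‖) + ∫ t in a..b, ‖deriv γ t‖) := by
  have hC : 0 ≤ C := (norm_nonneg _).trans (hDX 0)
  have hbound : ∀ t ∈ Set.Ioc a b,
      ‖⟪X (γ t + w t) - X (γ t), deriv γ t + deriv w t⟫ - ⟪fderiv ℝ X (γ t) (deriv γ t), w t⟫‖
        ≤ C * M * (‖deriv γ t + deriv w t‖ + ‖deriv γ t‖) := fun t ht ↦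
    (abs_inner_sub_sub_inner_fderiv_le (hX.differentiable one_ne_zero) hDX _ _ _ _).trans
      (by gcongr; exact hM t (Set.Ioc_subset_Icc_self ht))
  rw [integral_inner_add_sub_integral_inner_eq hX hγ hw ha hb, ← Real.norm_eq_abs]
  refine (norm_integral_le_of_norm_le hab (.of_forall hbound)
    (Continuous.intervalIntegrable (by fun_prop) _ _)).trans_eq ?_
  rw [integral_const_mul, integral_add (Continuous.intervalIntegrable (by fun_prop) _ _)
    (Continuous.intervalIntegrable (by fun_prop) _ _)]

end

theorem stmt_15_general (n : ℕ) (L : ℝ) (hL : 0 < L)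
    (γ₀ w : ℝ → EuclideanSpace ℝ (Fin n))
    (hγ : ContDiff ℝ 1 γ₀) (hw : ContDiff ℝ 1 w)
    (hw0 : w 0 = 0) (hwL : w L = 0)
    (X : EuclideanSpace ℝ (Fin n) → EuclideanSpace ℝ (Fin n))
    (hX : ContDiff ℝ 1 X) (hDX : ∀ p, ‖fderiv ℝ X p‖ ≤ 1) :
    |(∫ t in (0 : ℝ)..L, ⟪X (γ₀ t + w t), deriv γ₀ t + deriv w t⟫)
        - ∫ t in (0 : ℝ)..L, ⟪X (γ₀ t), deriv γ₀ t⟫|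
      ≤ (⨆ t : Set.Icc (0 : ℝ) L, ‖w (t : ℝ)‖) *
          ((∫ t in (0 : ℝ)..L, ‖deriv γ₀ t + deriv w t‖)
            + ∫ t in (0 : ℝ)..L, ‖deriv γ₀ t‖) := by
  have hbdd : BddAbove ((fun t ↦ ‖w t‖) '' Set.Icc 0 L) :=
    isCompact_Icc.bddAbove_image hw.continuous.norm.continuousOn
  have hsup : ∀ t ∈ Set.Icc 0 L, ‖w t‖ ≤ ⨆ t : Set.Icc (0 : ℝ) L, ‖w (t : ℝ)‖ :=
    fun t ht ↦ le_ciSup_set hbdd ht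
  simpa only [one_mul] using
    abs_integral_inner_add_sub_integral_inner_le hL.le hX hDX hγ hw hw0 hwL hsup

/-- Action of a C¹ vector field (bounded with bounded derivative) on a perturbed curve:
if the perturbation w vanishes at the endpoints, the difference of actions is bounded by
‖w‖_∞ times the sum of the lengths of the two curves. -/
theorem stmt_15 (n : ℕ) (hn : 1 ≤ n) (L : ℝ) (hL : 0 < L)
    (γ₀ w : ℝ → EuclideanSpace ℝ (Fin n))
    (hγ : ContDiff ℝ 1 γ₀) (hw : ContDiff ℝ 1 w)
    (hw0 : w 0 = 0) (hwL : w L = 0)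
    (X : EuclideanSpace ℝ (Fin n) → EuclideanSpace ℝ (Fin n))
    (hX : ContDiff ℝ 1 X) (hXb : ∀ p, ‖X p‖ ≤ 1) (hDX : ∀ p, ‖fderiv ℝ X p‖ ≤ 1) :
    |(∫ t in (0 : ℝ)..L, ⟪X (γ₀ t + w t), deriv γ₀ t + deriv w t⟫)
        - ∫ t in (0 : ℝ)..L, ⟪X (γ₀ t), deriv γ₀ t⟫|
      ≤ (⨆ t : Set.Icc (0 : ℝ) L, ‖w (t : ℝ)‖) *
          ((∫ t in (0 : ℝ)..L, ‖deriv γ₀ t + deriv w t‖)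
            + ∫ t in (0 : ℝ)..L, ‖deriv γ₀ t‖) :=
  stmt_15_general n L hL γ₀ w hγ hw hw0 hwL X hX hDX
end
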